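/- arXiv:1902.06902 — 3 statements merged into one kernel-verified Lean document; each statement's English description precedes it below -/
import Mathlib

section
/- Let $P = \mathbb{F}_2[x_1, x_2, \ldots]$ with the derivation $d(x_1)=0$, $d(x_i) = x_1 x_{i-1}^2$ for $i>1$. Then $x_1^2 x_3 + x_2^3$ is not a boundary: there is no $z \in P$ with $d(z) = x_1^2 x_3 + x_2^3$. -/
/-!
The derivation takes every generator into the ideal `(x₁)`, hence, by the Leibniz rule, every
polynomial; so every boundary is divisible by `x₁`. Since `x₁` is prime, `x₁ ∣ x₁² x₃ + x₂³`
would force `x₁ ∣ x₂`, which is false.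
-/

open MvPolynomial

/-- `P = 𝔽₂[x₁, x₂, …]`; the variable `X n` represents `x_{n+1}`. -/
abbrev PP : Type := MvPolynomial ℕ (ZMod 2)

namespace MvPolynomial

variable {σ R M : Type*} [CommRing R] [AddCommGroup M] [Module R M]
  [Module (MvPolynomial σ R) M] [IsScalarTower R (MvPolynomial σ R) M]

/-- Composed with `M → M ⧸ N`, `D` becomes a derivation vanishing on the variables, hence zero. -/
theorem derivation_mem_of_forall_X_mem (D : Derivation R (MvPolynomial σ R) M)
    (N : Submodule (MvPolynomial σ R) M) (hX : ∀ i, D (X i) ∈ N) (p : MvPolynomial σ R) :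
    D p ∈ N := by
  have hzero : N.mkQ.compDer D = 0 :=
    derivation_ext fun i => by simpa [Submodule.Quotient.mk_eq_zero] using hX i
  simpa [Submodule.Quotient.mk_eq_zero] using congrArg (fun D' => D' p) hzero

end MvPolynomial

/-- `x₁² x₃ + x₂³` is not a boundary for Mahowald's differential. -/
theorem mahowald_not_boundary
    (d : Derivation (ZMod 2) PP PP)
    (h1 : d (X 0) = 0)
    (hs : ∀ n : ℕ, d (X (n + 1)) = X 0 * (X n) ^ 2) :
    ¬ ∃ z : PP, d z = (X 0) ^ 2 * X 2 + (X 1) ^ 3 := by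
  rintro ⟨z, hz⟩
  have hdvd : ∀ p : PP, X 0 ∣ d p := by
    intro p
    rw [← Ideal.mem_span_singleton]
    refine derivation_mem_of_forall_X_mem d _ (fun i => ?_) p
    rw [Ideal.mem_span_singleton]
    cases i with
    | zero => simp [h1]
    | succ n => simp [hs]
  have hX1 : (X 0 : PP) ∣ X 1 ^ 3 :=
    (dvd_add_right (dvd_mul_of_dvd_left (dvd_pow_self _ two_ne_zero) _)).mp (hz ▸ hdvd z)
  exact absurd (X_dvd_X.mp (X_prime.dvd_of_dvd_pow hX1)) zero_ne_one
end

section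
/- Let $B = \mathbb{F}_2[w, w^{-1}, h, x_1, x_2, \ldots]$ with the derivation $D(w) = h^3$, $D(h) = D(x_1) = 0$, $D(x_n) = w^{-2} h x_1 x_{n-1}^2$ for $n \geq 2$. Suppose instead one defined $D'(x_n) = w^{-2} h x_1 x_{n-1}^2 + w^{-1} h^3 x_n$ for some fixed $n \geq 2$ (and $D'$ agreeing with $D$ on all other generators). Then $D' \circ D' \neq 0$; in particular $(D')^2(w x_n) = w^{-2} h^4 x_1 x_{n-1}^2 \neq 0$. -/
/-- `B = 𝔽₂[w^{±1}, h, x₁, x₂, …]`, realized as the monoid algebra of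
`ℤ × ℕ × (ℕ →₀ ℕ)` over `𝔽₂`: the `ℤ`-coordinate records the exponent of the
invertible generator `w`, the `ℕ`-coordinate the exponent of `h`, and the
`(n-1)`-st coordinate of the `Finsupp` the exponent of `xₙ` (for `n ≥ 1`). -/
abbrev LB : Type := AddMonoidAlgebra (ZMod 2) (ℤ × ℕ × (ℕ →₀ ℕ))

noncomputable def bw : LB := AddMonoidAlgebra.of' (ZMod 2) (ℤ × ℕ × (ℕ →₀ ℕ)) (1, 0, 0)
noncomputable def bwinv : LB := AddMonoidAlgebra.of' (ZMod 2) (ℤ × ℕ × (ℕ →₀ ℕ)) (-1, 0, 0)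
noncomputable def bh : LB := AddMonoidAlgebra.of' (ZMod 2) (ℤ × ℕ × (ℕ →₀ ℕ)) (0, 1, 0)
/-- `bx n` is the generator `xₙ`, for `n ≥ 1`. -/
noncomputable def bx (n : ℕ) : LB :=
  AddMonoidAlgebra.of' (ZMod 2) (ℤ × ℕ × (ℕ →₀ ℕ)) (0, 0, Finsupp.single (n - 1) 1)


namespace Derivation

variable {R A : Type*} [CommRing R] [CommRing A] [Algebra R A] [CharP A 2]
  (D : Derivation R A A)

theorem map_sq_eq_zero_of_charTwo (a : A) : D (a ^ 2) = 0 := by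
  rw [D.leibniz_pow, two_nsmul, CharTwo.add_self_eq_zero]

theorem map_of_mul_eq_one_of_charTwo {a b : A} (h : a * b = 1) : D b = b ^ 2 * D a := by
  rw [D.leibniz_of_mul_eq_one ((mul_comm b a).trans h), CharTwo.neg_eq, smul_eq_mul]

/-- Here `w'` stands for `w⁻¹` and `y` for `xₙ₋₁`. The twist `w' h³ x` in `D x` cancels against
`x D w` in `D (w * x)`, and `D w' = w'² h³` then makes the remaining term non-closed. -/
theorem map_map_mul_eq_of_charTwo {w w' h x₁ x y : A} (hww' : w * w' = 1)
    (hw : D w = h ^ 3) (hh : D h = 0) (hx₁ : D x₁ = 0)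
    (hx : D x = w' ^ 2 * h * x₁ * y ^ 2 + w' * h ^ 3 * x) :
    D (D (w * x)) = w' ^ 2 * h ^ 4 * x₁ * y ^ 2 := by
  have hw' : D w' = w' ^ 2 * h ^ 3 := by rw [D.map_of_mul_eq_one_of_charTwo hww', hw]
  have hwx : D (w * x) = w' * h * x₁ * y ^ 2 := by
    rw [D.leibniz, smul_eq_mul, smul_eq_mul, hw, hx]
    linear_combination
      (w' * h * x₁ * y ^ 2 + h ^ 3 * x) * hww' + h ^ 3 * x * CharTwo.two_eq_zero (R := A)
  rw [hwx]
  simp only [D.leibniz, smul_eq_mul, hw', hh, hx₁, D.map_sq_eq_zero_of_charTwo]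
  ring

end Derivation

instance : CharP LB 2 := charP_of_injective_algebraMap' (ZMod 2) 2

theorem bw_mul_bwinv : bw * bwinv = 1 := by
  simp [bw, bwinv, AddMonoidAlgebra.of'_apply, AddMonoidAlgebra.single_mul_single,
    AddMonoidAlgebra.one_def, Prod.mk_zero_zero]

theorem alternative_d3_not_a_differential_general
    (n₀ : ℕ)
    (D' : Derivation (ZMod 2) LB LB)
    (hw : D' bw = bh ^ 3)
    (hh : D' bh = 0)
    (hx1 : D' (bx 1) = 0)
    (hxn₀ : D' (bx n₀) =
      bwinv ^ 2 * bh * bx 1 * (bx (n₀ - 1)) ^ 2 + bwinv * bh ^ 3 * bx n₀) :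
    D' (D' (bw * bx n₀)) = bwinv ^ 2 * bh ^ 4 * bx 1 * (bx (n₀ - 1)) ^ 2 ∧
    bwinv ^ 2 * bh ^ 4 * bx 1 * (bx (n₀ - 1)) ^ 2 ≠ 0 ∧
    ∃ p : LB, D' (D' p) ≠ 0 := by
  have hsq := D'.map_map_mul_eq_of_charTwo bw_mul_bwinv hw hh hx1 hxn₀
  -- `LB` is a domain, the exponent monoid having `UniqueSums`.
  have hne : bwinv ^ 2 * bh ^ 4 * bx 1 * (bx (n₀ - 1)) ^ 2 ≠ 0 := by
    simp [bwinv, bh, bx]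
  exact ⟨hsq, hne, bw * bx n₀, hsq ▸ hne⟩

/-- If for some fixed `n₀ ≥ 2` one instead set
`D'(x_{n₀}) = w⁻² h x₁ x_{n₀-1}² + w⁻¹ h³ x_{n₀}` (with `D'` agreeing with the
derivation `D` of the main conjecture on all other generators), then
`D' ∘ D' ≠ 0`; in particular `(D')²(w x_{n₀}) = w⁻² h⁴ x₁ x_{n₀-1}² ≠ 0`. -/
theorem alternative_d3_not_a_differential
    (n₀ : ℕ) (hn₀ : 2 ≤ n₀)
    (D' : Derivation (ZMod 2) LB LB)
    (hw : D' bw = bh ^ 3)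
    (hh : D' bh = 0)
    (hx1 : D' (bx 1) = 0)
    (hxn : ∀ n : ℕ, 2 ≤ n → n ≠ n₀ →
      D' (bx n) = bwinv ^ 2 * bh * bx 1 * (bx (n - 1)) ^ 2)
    (hxn₀ : D' (bx n₀) =
      bwinv ^ 2 * bh * bx 1 * (bx (n₀ - 1)) ^ 2 + bwinv * bh ^ 3 * bx n₀) :
    D' (D' (bw * bx n₀)) = bwinv ^ 2 * bh ^ 4 * bx 1 * (bx (n₀ - 1)) ^ 2 ∧
    bwinv ^ 2 * bh ^ 4 * bx 1 * (bx (n₀ - 1)) ^ 2 ≠ 0 ∧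
    ∃ p : LB, D' (D' p) ≠ 0 :=
  alternative_d3_not_a_differential_general n₀ D' hw hh hx1 hxn₀
end

section
/- Let $P = \mathbb{F}_2[x_1, x_2, \ldots]$ with derivation $d(x_1)=0$, $d(x_i)=x_1x_{i-1}^2$ for $i>1$, and form the complex $C^n$ for $n \geq 0$ defined as follows: $C^n = \bigoplus$ of copies of $P$ indexed by pairs, with differential $d_3^n$ as in the $E_3$-page of the spectral sequence, where for $n \geq 2$ an element of $C^n$ is written $\sum_i v^{m_i} y_i + \sum_j v^{l_j} z_j h^2$ (with $m_i \equiv 2,3 \pmod 4$, $l_j \equiv 0,1 \pmod 4$, $y_i, z_j \in P$) and $d_3^n$ sends $v^m y \mapsto v^{m-2} y h^{3}$-terms plus $v^{m-4} d(y) h$-terms. Then for $n \geq 3$, the complex is exact at position $n$: $\ker(d_3^n) = \operatorname{im}(d_3^{n-1})$. -/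
open MvPolynomial

/-- An element of `E₃(M;Q₁) = 𝔽₂[v^{±1}, h] ⊗ P` is a finitely supported
function `(m, j) ↦ y ∈ P`, recording the coefficient of `v^m h^j`. -/
abbrev E3M : Type := (ℤ × ℕ) →₀ PP

/-- The auxiliary grading: `|v^m h^j| = j + (2 if m ≡ 2,3 (mod 4) else 0)`. -/
def auxGrade (p : ℤ × ℕ) : ℕ :=
  p.2 + (if p.1 % 4 = 2 ∨ p.1 % 4 = 3 then 2 else 0)

/-- The differential `d₃` on `E₃(M;Q₁)`:
`v^m h^j y ↦ [m ≡ 2,3 (4)] v^{m-2} h^{j+3} y + v^{m-4} h^{j+1} d(y)`. -/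
noncomputable def d3M (d : Derivation (ZMod 2) PP PP) (c : E3M) : E3M :=
  c.sum fun p y =>
    (if p.1 % 4 = 2 ∨ p.1 % 4 = 3 then Finsupp.single (p.1 - 2, p.2 + 3) y else 0) +
      Finsupp.single (p.1 - 4, p.2 + 1) (d y)

/-!
A cycle `c` concentrated in auxiliary grading `n` has two kinds of terms: `v^m y h^n` with
`m ≡ 0, 1 (mod 4)` and `v^m y h^(n-2)` with `m ≡ 2, 3 (mod 4)`. In characteristic two the
cycle condition at `v^(m-2) h^(n+1)` says that the coefficient of `v^m h^(n-2)` is `d` of the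
coefficient of `v^(m+2) h^n`. Hence `c = d₃ b`, where `b` is the `h^n`-part of `c` divided by
`v⁻² h³`; for `n ≥ 3` this division stays inside nonnegative powers of `h`.
-/

lemma auxGrade_eq_iff {m : ℤ} {j n : ℕ} :
    auxGrade (m, j) = n ↔
      (m % 4 = 0 ∨ m % 4 = 1) ∧ j = n ∨ (m % 4 = 2 ∨ m % 4 = 3) ∧ j + 2 = n := by
  unfold auxGrade
  split <;> omega

section d3M

variable (d : Derivation (ZMod 2) PP PP)

lemma d3M_add (f g : E3M) : d3M d (f + g) = d3M d f + d3M d g :=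
  Finsupp.sum_add_index' (fun _ => by simp) fun _ _ _ => by
    rw [map_add, Finsupp.single_add, Finsupp.single_add]
    split_ifs <;> abel

lemma d3M_single (p : ℤ × ℕ) (y : PP) :
    d3M d (Finsupp.single p y) =
      (if p.1 % 4 = 2 ∨ p.1 % 4 = 3 then Finsupp.single (p.1 - 2, p.2 + 3) y else 0) +
        Finsupp.single (p.1 - 4, p.2 + 1) (d y) :=
  Finsupp.sum_single_index (by simp)

lemma d3M_apply (c : E3M) (m : ℤ) (j : ℕ) :
    d3M d c (m, j) =
      (if (m % 4 = 0 ∨ m % 4 = 1) ∧ 3 ≤ j then c (m + 2, j - 3) else 0) +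
        if 1 ≤ j then d (c (m + 4, j - 1)) else 0 := by
  induction c using Finsupp.induction_linear with
  | zero => simp [d3M]
  | add f g hf hg =>
    rw [d3M_add, Finsupp.add_apply, hf, hg]
    simp only [Finsupp.add_apply, map_add]
    split_ifs <;> abel
  | single p y =>
    obtain ⟨a, i⟩ := p
    rw [d3M_single, Finsupp.add_apply]
    dsimp only
    split_ifs <;>
      simp only [Finsupp.single_apply, Prod.mk.injEq, Finsupp.coe_zero, Pi.zero_apply] <;>
      split_ifs <;> first | omega | simp

end d3M

lemma apply_eq_of_d3M_eq_zero {d : Derivation (ZMod 2) PP PP} {c : E3M} (hc : d3M d c = 0)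
    {m : ℤ} (hm : m % 4 = 2 ∨ m % 4 = 3) (j : ℕ) : c (m, j) = d (c (m + 2, j + 2)) := by
  have h := congrArg (· (m - 2, j + 3)) hc
  simp only [d3M_apply, Finsupp.coe_zero, Pi.zero_apply] at h
  rw [if_pos ⟨by omega, by omega⟩, if_pos (by omega)] at h
  simpa [CharTwo.add_eq_zero, show m - 2 + 4 = m + 2 by ring] using h

-- `c / (v⁻² h³)`: the coefficient of `v^m h^j` is that of `v^(m-2) h^(j+3)` in `c`.
noncomputable def divShift (c : E3M) : E3M :=
  c.comapDomain (fun q => (q.1 - 2, q.2 + 3))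
    (Function.Injective.injOn fun p q h => by
      simp only [Prod.mk.injEq] at h
      exact Prod.ext (by omega) (by omega))

lemma divShift_apply (c : E3M) (m : ℤ) (j : ℕ) : divShift c (m, j) = c (m - 2, j + 3) := rfl

lemma apply_eq_zero_of_auxGrade_ne {c : E3M} {n : ℕ} (hc : ∀ p ∈ c.support, auxGrade p = n)
    {p : ℤ × ℕ} (hp : auxGrade p ≠ n) : c p = 0 :=
  Finsupp.notMem_support_iff.1 (mt (hc p) hp)

lemma auxGrade_divShift_filter {c : E3M} {n : ℕ} (hn : 3 ≤ n)
    (hc : ∀ p ∈ c.support, auxGrade p = n) :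
    ∀ p ∈ (divShift (c.filter fun p => p.2 = n)).support, auxGrade p = n - 1 := by
  rintro ⟨m, j⟩ hp
  rw [Finsupp.mem_support_iff, divShift_apply, Finsupp.filter_apply, ite_ne_right_iff] at hp
  have := hc _ (Finsupp.mem_support_iff.2 hp.2)
  rw [auxGrade_eq_iff] at this ⊢
  omega

lemma d3M_divShift_filter {d : Derivation (ZMod 2) PP PP} {c : E3M} {n : ℕ} (hn : 3 ≤ n)
    (hc : ∀ p ∈ c.support, auxGrade p = n) (hcyc : d3M d c = 0) :
    d3M d (divShift (c.filter fun p => p.2 = n)) = c := by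
  ext ⟨m, j⟩ : 1
  have hzero {a : ℤ} {i : ℕ}
      (h : ¬((a % 4 = 0 ∨ a % 4 = 1) ∧ i = n ∨ (a % 4 = 2 ∨ a % 4 = 3) ∧ i + 2 = n)) :
      c (a, i) = 0 :=
    apply_eq_zero_of_auxGrade_ne hc (mt auxGrade_eq_iff.1 h)
  simp only [d3M_apply, divShift_apply, Finsupp.filter_apply, add_sub_cancel_right,
    show m + 4 - 2 = m + 2 by ring, apply_ite d, map_zero, ← ite_and]
  rcases (by omega : j = n ∨ j + 2 = n ∨ (j ≠ n ∧ j + 2 ≠ n)) with hj | hj | ⟨hj, hj'⟩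
  · subst j
    rw [if_neg (show ¬(1 ≤ n ∧ n - 1 + 3 = n) by omega), add_zero, Nat.sub_add_cancel hn]
    by_cases hm : m % 4 = 0 ∨ m % 4 = 1
    · rw [if_pos ⟨⟨hm, hn⟩, rfl⟩]
    · rw [if_neg (by tauto), hzero (by omega)]
  · subst n
    rw [if_neg (by omega), zero_add, show j - 1 + 3 = j + 2 by omega]
    by_cases hm : m % 4 = 2 ∨ m % 4 = 3
    · rw [if_pos ⟨by omega, rfl⟩, apply_eq_of_d3M_eq_zero hcyc hm]
    · rw [hzero (a := m) (by omega), hzero (a := m + 2) (by omega), map_zero, ite_self]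
  · rw [if_neg (by omega), if_neg (by omega), add_zero, hzero (by omega)]

theorem E3_complex_exact_high_degrees_general
    (d : Derivation (ZMod 2) PP PP) :
    ∀ n : ℕ, 3 ≤ n → ∀ c : E3M,
      (∀ p ∈ c.support, auxGrade p = n) → d3M d c = 0 →
      ∃ b : E3M, (∀ p ∈ b.support, auxGrade p = n - 1) ∧ d3M d b = c :=
  fun n hn c hc hcyc =>
    ⟨divShift (c.filter fun p => p.2 = n), auxGrade_divShift_filter hn hc,
      d3M_divShift_filter hn hc hcyc⟩

/-- The graded complex `(E_{3,n}, d₃)` is exact at every position `n ≥ 3`: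
every cycle concentrated in auxiliary grading `n` is the boundary of an
element concentrated in grading `n - 1`. -/
theorem E3_complex_exact_high_degrees
    (d : Derivation (ZMod 2) PP PP)
    (h1 : d (X 0) = 0)
    (hs : ∀ n : ℕ, d (X (n + 1)) = X 0 * (X n) ^ 2) :
    ∀ n : ℕ, 3 ≤ n → ∀ c : E3M,
      (∀ p ∈ c.support, auxGrade p = n) → d3M d c = 0 →
      ∃ b : E3M, (∀ p ∈ b.support, auxGrade p = n - 1) ∧ d3M d b = c :=
  E3_complex_exact_high_degrees_general d
end
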